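/- arXiv:2510.01707 — 2 statements merged into one kernel-verified Lean document; each statement's English description precedes it below -/
import Mathlib

section
/- Let N ≥ 1 and let f_max(v) = (4N/√(2πv))·e^{−v/2}·Q(√v)·(1 − 4(Q(√v))²)^{N−1} for v > 0. Then as v → 0⁺, v^{−(N−2)/2}·f_max(v) → (N/2)·(4/√(2π))^N. (Behavior of the pdf of the maximum of N i.i.d. variables with density f₂ near the origin.) -/
open Real MeasureTheory Filter Set

noncomputable def gaussQ (x : ℝ) : ℝ :=
  ∫ t in Set.Ioi x, (1 / Real.sqrt (2 * Real.pi)) * Real.exp (-t ^ 2 / 2)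

noncomputable def fmax (N : ℕ) (v : ℝ) : ℝ :=
  (4 * N / Real.sqrt (2 * Real.pi * v)) * Real.exp (-v / 2) * gaussQ (Real.sqrt v) *
    (1 - 4 * (gaussQ (Real.sqrt v)) ^ 2) ^ (N - 1)

/-!
Put `s = √v`. Since `√(2πv) = √(2π) s` and `v ^ (-(N-2)/2) = s / s ^ (N-1)`, the rescaled
density is `(4N/√(2π)) e^{-v/2} Q(s) ((1 - 4 Q(s)²) / s) ^ (N-1)`. The function `1 - 4 Q²`
vanishes at `0` (as `Q 0 = 1/2`) with derivative `-8 Q(0) Q'(0) = 4/√(2π)`, so the last quotient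
tends to `4/√(2π)` and every factor has a limit.
-/

open ProbabilityTheory Topology

lemma gaussQ_eq_integral_gaussianPDFReal (x : ℝ) :
    gaussQ x = ∫ t in Ioi x, gaussianPDFReal 0 1 t := by
  simp only [gaussQ, gaussianPDFReal, NNReal.coe_one, mul_one, sub_zero, one_div]

lemma gaussianPDFReal_zero_one_zero : gaussianPDFReal 0 1 0 = 1 / √(2 * π) := by
  simp [gaussianPDFReal]

lemma gaussQ_zero : gaussQ 0 = 1 / 2 := by
  have hpos : 0 < √(2 * π) := by positivity
  rw [gaussQ, integral_const_mul]
  have h : ∀ t : ℝ, exp (-t ^ 2 / 2) = exp (-(1 / 2) * t ^ 2) := fun t => by ring_nf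
  simp_rw [h, integral_gaussian_Ioi, div_div_eq_mul_div, mul_comm π]
  field_simp

lemma gaussQ_sub_gaussQ (a b : ℝ) :
    gaussQ a - gaussQ b = ∫ t in a..b, gaussianPDFReal 0 1 t := by
  simp only [gaussQ_eq_integral_gaussianPDFReal]
  exact intervalIntegral.integral_Ioi_sub_Ioi' (integrable_gaussianPDFReal 0 1).integrableOn
    (integrable_gaussianPDFReal 0 1).integrableOn

lemma continuous_gaussianPDFReal (μ : ℝ) (v : NNReal) : Continuous (gaussianPDFReal μ v) := by
  rw [gaussianPDFReal_def]; fun_prop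

lemma hasDerivAt_gaussQ (x : ℝ) : HasDerivAt gaussQ (-gaussianPDFReal 0 1 x) x := by
  have hQ : gaussQ = fun y => gaussQ 0 - ∫ t in 0..y, gaussianPDFReal 0 1 t := by
    ext y; rw [← gaussQ_sub_gaussQ]; ring
  rw [hQ]
  exact ((continuous_gaussianPDFReal 0 1).integral_hasStrictDerivAt 0 x).hasDerivAt.const_sub _

lemma hasDerivAt_one_sub_four_mul_gaussQ_sq :
    HasDerivAt (fun x => 1 - 4 * gaussQ x ^ 2) (4 / √(2 * π)) 0 := by
  have h := (((hasDerivAt_gaussQ 0).fun_pow 2).const_mul 4).const_sub 1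
  rw [gaussQ_zero, gaussianPDFReal_zero_one_zero] at h
  exact h.congr_deriv (by ring)

lemma tendsto_div_self_nhdsGT_of_hasDerivAt {f : ℝ → ℝ} {f' : ℝ} (hf : HasDerivAt f f' 0)
    (h0 : f 0 = 0) : Tendsto (fun x => f x / x) (𝓝[>] 0) (𝓝 f') := by
  simpa [h0, div_eq_inv_mul] using hf.tendsto_slope_zero_right

lemma tendsto_sqrt_nhdsGT_zero : Tendsto (√·) (𝓝[>] 0) (𝓝[>] 0) := by
  have h : MapsTo (√·) (Ioi 0) (Ioi 0) := fun _ hx => sqrt_pos.2 hx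
  simpa using continuous_sqrt.continuousWithinAt.tendsto_nhdsWithin h (x := 0)

lemma rpow_mul_fmax_eq {N : ℕ} (hN : 1 ≤ N) {v : ℝ} (hv : 0 < v) :
    v ^ (-(((N : ℝ) - 2) / 2)) * fmax N v =
      4 * N / √(2 * π) * exp (-v / 2) * gaussQ √v *
        ((1 - 4 * gaussQ √v ^ 2) / √v) ^ (N - 1) := by
  have hs : 0 < √v := sqrt_pos.2 hv
  have hpow : v ^ (-(((N : ℝ) - 2) / 2)) = √v / √v ^ (N - 1) := by
    rw [eq_div_iff (by positivity), sqrt_eq_rpow, ← rpow_natCast, ← rpow_mul hv.le,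
      ← rpow_add hv]
    congr 1; push_cast [hN]; ring
  rw [fmax, sqrt_mul (by positivity), div_pow, hpow]
  field_simp

/-- v^{−(N−2)/2} · f_max(v) → (N/2)(4/√(2π))^N as v → 0⁺. -/
theorem fmax_asymptotic_at_zero (N : ℕ) (hN : 1 ≤ N) :
    Tendsto (fun v : ℝ => v ^ (-(((N : ℝ) - 2) / 2)) * fmax N v)
      (nhdsWithin 0 (Set.Ioi 0))
      (nhds ((N / 2 : ℝ) * (4 / Real.sqrt (2 * Real.pi)) ^ N)) := by
  have hQ : Tendsto (fun v => gaussQ √v) (𝓝[>] 0) (𝓝 (1 / 2)) := by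
    rw [← gaussQ_zero]
    exact (hasDerivAt_gaussQ 0).continuousAt.tendsto.comp
      (tendsto_sqrt_nhdsGT_zero.mono_right nhdsWithin_le_nhds)
  have hquot : Tendsto (fun v => (1 - 4 * gaussQ √v ^ 2) / √v) (𝓝[>] 0)
      (𝓝 (4 / √(2 * π))) :=
    (tendsto_div_self_nhdsGT_of_hasDerivAt hasDerivAt_one_sub_four_mul_gaussQ_sq
      (by rw [gaussQ_zero]; norm_num)).comp tendsto_sqrt_nhdsGT_zero
  have hexp : Tendsto (fun v : ℝ => exp (-v / 2)) (𝓝[>] 0) (𝓝 1) :=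
    ((by fun_prop : Continuous fun v : ℝ => exp (-v / 2)).tendsto' 0 1 (by simp)).mono_left
      nhdsWithin_le_nhds
  have hlim := (((tendsto_const_nhds (x := 4 * N / √(2 * π))).mul hexp).mul hQ).mul
    (hquot.pow (N - 1))
  have hval : 4 * N / √(2 * π) * 1 * (1 / 2) * (4 / √(2 * π)) ^ (N - 1) =
      N / 2 * (4 / √(2 * π)) ^ N := by
    obtain ⟨n, rfl⟩ := Nat.exists_eq_add_of_le' hN
    rw [Nat.add_sub_cancel, pow_succ]
    ring
  rw [← hval]
  refine hlim.congr' ?_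
  filter_upwards [self_mem_nhdsWithin] with v hv
  exact (rpow_mul_fmax_eq hN hv).symm
end

section
/- For every N ≥ 1, the ratio π/(4N)·((2N)!/N!)^{1/N} lies in the half-open interval (π/e, π/2], with equality to π/2 exactly when N = 1. -/
open Real

private lemma log_step {y : ℝ} (hy : 1 ≤ y) :
    (y+1) * Real.log (y+1) - (y+1) - (y * Real.log y - y) < Real.log (y+1) := by
  have hy0 : 0 < y := by linarith
  have h1 : Real.log (1 + 1/y) < 1/y := by
    have h := Real.add_one_lt_exp (x := 1/y) (by positivity)
    calc Real.log (1 + 1/y) < Real.log (Real.exp (1/y)) := by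
          apply Real.log_lt_log (by positivity); linarith
      _ = 1/y := Real.log_exp _
  have h2 : Real.log (y+1) - Real.log y = Real.log (1 + 1/y) := by
    rw [← Real.log_div (by linarith) (ne_of_gt hy0)]
    congr 1; field_simp
  have h3 : y * (Real.log (y+1) - Real.log y) < 1 := by
    rw [h2]
    calc y * Real.log (1 + 1/y) < y * (1/y) := by
          exact mul_lt_mul_of_pos_left h1 hy0
      _ = 1 := by field_simp
  nlinarith [h3]

/-- For N ≥ 1, π/(4N)·((2N)!/N!)^{1/N} ∈ (π/e, π/2], with equality π/2 iff N = 1. -/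
theorem coding_gain_ratio_bounds (N : ℕ) (hN : 1 ≤ N) :
    Real.pi / Real.exp 1 <
      Real.pi / (4 * N) * ((Nat.factorial (2 * N) / Nat.factorial N : ℝ)) ^ (1 / (N : ℝ)) ∧
    Real.pi / (4 * N) * ((Nat.factorial (2 * N) / Nat.factorial N : ℝ)) ^ (1 / (N : ℝ)) ≤
      Real.pi / 2 ∧
    (Real.pi / (4 * N) * ((Nat.factorial (2 * N) / Nat.factorial N : ℝ)) ^ (1 / (N : ℝ)) =
      Real.pi / 2 ↔ N = 1) := by
  have hN0 : (0:ℝ) < N := by exact_mod_cast hN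
  have hNne : (N:ℝ) ≠ 0 := ne_of_gt hN0
  set P : ℝ := ((Nat.factorial (2 * N) : ℝ) / (Nat.factorial N : ℝ)) with hPdef
  -- product formula
  have hfacnat : Nat.factorial N * ∏ k ∈ Finset.Ico (N+1) (2*N+1), k = Nat.factorial (2*N) := by
    rw [← Finset.prod_Ico_id_eq_factorial, ← Finset.prod_Ico_id_eq_factorial]
    exact Finset.prod_Ico_consecutive _ (by omega) (by omega)
  have hprod : P = ∏ k ∈ Finset.Ico (N+1) (2*N+1), (k:ℝ) := by
    have h := hfacnat
    have h2 : ((Nat.factorial N : ℕ):ℝ) * ∏ k ∈ Finset.Ico (N+1) (2*N+1), (k:ℝ) = ((Nat.factorial (2*N) : ℕ):ℝ) := by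
      have h3 := congrArg (Nat.cast : ℕ → ℝ) h
      push_cast at h3
      exact h3
    rw [hPdef, ← h2, mul_div_cancel_left₀ _ (by positivity : (Nat.factorial N : ℝ) ≠ 0)]
  have hPpos : 0 < P := by
    rw [hprod]
    apply Finset.prod_pos
    intro k hk
    have := (Finset.mem_Ico.mp hk).1
    have : 0 < k := by omega
    exact_mod_cast this
  -- lower bound on log P via telescoping
  have hlogP : Real.log P = ∑ k ∈ Finset.Ico (N+1) (2*N+1), Real.log k := by
    rw [hprod]
    apply Real.log_prod
    intro k hk
    have := (Finset.mem_Ico.mp hk).1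
    have : 0 < k := by omega
    exact_mod_cast ne_of_gt this
  set g : ℕ → ℝ := fun k => (k:ℝ) * Real.log k - k with hg
  have hsum : (N:ℝ) * (Real.log (4*(N:ℝ)) - 1) < Real.log P := by
    rw [hlogP, Finset.sum_Ico_eq_sum_range]
    have hcard : 2*N+1 - (N+1) = N := by omega
    rw [hcard]
    have htel : ∑ i ∈ Finset.range N, (g (N + (i+1)) - g (N + i)) = g (2*N) - g N := by
      have := Finset.sum_range_sub (fun i => g (N + i)) N
      simpa [two_mul] using this
    have hstep : ∀ i ∈ Finset.range N, g (N + (i+1)) - g (N + i) < Real.log ((N + (i+1) : ℕ)) := by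
      intro i _
      have hy : (1:ℝ) ≤ (N + i : ℕ) := by
        have : 1 ≤ N + i := by omega
        exact_mod_cast this
      have h := log_step hy
      have hcast : ((N + (i+1) : ℕ) : ℝ) = ((N + i : ℕ) : ℝ) + 1 := by push_cast; ring
      simp only [hg]
      rw [hcast]
      convert h using 2
    have hlt : ∑ i ∈ Finset.range N, (g (N + (i+1)) - g (N + i)) <
        ∑ i ∈ Finset.range N, Real.log ((N + (i+1) : ℕ)) := by
      apply Finset.sum_lt_sum_of_nonempty
      · exact Finset.nonempty_range_iff.mpr (by omega)
      · exact hstep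
    have hval : g (2*N) - g N = (N:ℝ) * (Real.log (4*(N:ℝ)) - 1) := by
      simp only [hg]
      have h2 : Real.log (2*(N:ℝ)) = Real.log 2 + Real.log N :=
        Real.log_mul two_ne_zero hNne
      have h4 : Real.log (4*(N:ℝ)) = Real.log 4 + Real.log N :=
        Real.log_mul (by norm_num) hNne
      have h42 : Real.log 4 = 2 * Real.log 2 := by
        rw [show (4:ℝ) = 2^2 by norm_num, Real.log_pow]; push_cast; ring
      push_cast
      rw [h2, h4, h42]
      ring
    calc (N:ℝ) * (Real.log (4*(N:ℝ)) - 1) = g (2*N) - g N := hval.symm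
      _ = ∑ i ∈ Finset.range N, (g (N + (i+1)) - g (N + i)) := htel.symm
      _ < ∑ i ∈ Finset.range N, Real.log ((N + (i+1) : ℕ)) := hlt
      _ = ∑ i ∈ Finset.range N, Real.log ((N + 1 + i : ℕ)) := by
          apply Finset.sum_congr rfl; intro i _
          have : N + (i+1) = N + 1 + i := by omega
          rw [this]
  -- lower bound
  have hlow : Real.pi / Real.exp 1 < Real.pi / (4 * N) * P ^ (1 / (N:ℝ)) := by
    have h1 : Real.log (4*(N:ℝ)) - 1 < Real.log P * (1 / N) := by
      rw [mul_one_div, lt_div_iff₀ hN0]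
      linarith [hsum]
    have h2 : Real.exp (Real.log (4*(N:ℝ)) - 1) < P ^ (1 / (N:ℝ)) := by
      rw [Real.rpow_def_of_pos hPpos]
      exact Real.exp_lt_exp.mpr h1
    have h3 : Real.exp (Real.log (4*(N:ℝ)) - 1) = 4 * N / Real.exp 1 := by
      rw [Real.exp_sub, Real.exp_log (by positivity)]
    rw [h3] at h2
    have hpi : 0 < Real.pi / (4 * (N:ℝ)) := by positivity
    have := mul_lt_mul_of_pos_left h2 hpi
    calc Real.pi / Real.exp 1 = Real.pi / (4 * N) * (4 * N / Real.exp 1) := by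
          field_simp
      _ < Real.pi / (4 * N) * P ^ (1 / (N:ℝ)) := this
  -- upper bound (≤)
  have hub : P ≤ (2*(N:ℝ)) ^ N := by
    rw [hprod]
    have : (2*(N:ℝ)) ^ N = ∏ _k ∈ Finset.Ico (N+1) (2*N+1), (2*(N:ℝ)) := by
      have hc : 2*N+1 - (N+1) = N := by omega
      rw [Finset.prod_const, Nat.card_Ico, hc]
    rw [this]
    apply Finset.prod_le_prod
    · intro k _; positivity
    · intro k hk
      have h := (Finset.mem_Ico.mp hk).2
      have : k ≤ 2*N := by omega
      calc (k:ℝ) ≤ ((2*N : ℕ) : ℝ) := by exact_mod_cast this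
        _ = 2*(N:ℝ) := by push_cast; ring
  have hpowcollapse : ((2*(N:ℝ)) ^ N) ^ (1 / (N:ℝ)) = 2*(N:ℝ) := by
    rw [← Real.rpow_natCast (2*(N:ℝ)) N, ← Real.rpow_mul (by positivity)]
    rw [mul_one_div, div_self hNne, Real.rpow_one]
  have hup : Real.pi / (4 * N) * P ^ (1 / (N:ℝ)) ≤ Real.pi / 2 := by
    have h1 : P ^ (1 / (N:ℝ)) ≤ 2*(N:ℝ) := by
      calc P ^ (1 / (N:ℝ)) ≤ ((2*(N:ℝ)) ^ N) ^ (1 / (N:ℝ)) :=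
            Real.rpow_le_rpow (le_of_lt hPpos) hub (by positivity)
        _ = 2*(N:ℝ) := hpowcollapse
    have hpi : 0 < Real.pi / (4 * (N:ℝ)) := by positivity
    calc Real.pi / (4 * N) * P ^ (1 / (N:ℝ)) ≤ Real.pi / (4 * N) * (2*(N:ℝ)) :=
          mul_le_mul_of_nonneg_left h1 (le_of_lt hpi)
      _ = Real.pi / 2 := by field_simp; ring
  -- strict upper bound for N ≥ 2
  have hstrict : 2 ≤ N → Real.pi / (4 * N) * P ^ (1 / (N:ℝ)) < Real.pi / 2 := by
    intro h2N
    have hlt : P < (2*(N:ℝ)) ^ N := by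
      rw [hprod]
      have : (2*(N:ℝ)) ^ N = ∏ _k ∈ Finset.Ico (N+1) (2*N+1), (2*(N:ℝ)) := by
        have hc : 2*N+1 - (N+1) = N := by omega
        rw [Finset.prod_const, Nat.card_Ico, hc]
      rw [this]
      apply Finset.prod_lt_prod
      · intro k hk
        have := (Finset.mem_Ico.mp hk).1
        have : 0 < k := by omega
        exact_mod_cast this
      · intro k hk
        have h := (Finset.mem_Ico.mp hk).2
        have : k ≤ 2*N := by omega
        calc (k:ℝ) ≤ ((2*N : ℕ) : ℝ) := by exact_mod_cast this
          _ = 2*(N:ℝ) := by push_cast; ring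
      · refine ⟨N+1, Finset.mem_Ico.mpr ⟨le_refl _, by omega⟩, ?_⟩
        have : N+1 < 2*N := by omega
        calc ((N+1 : ℕ):ℝ) < ((2*N : ℕ):ℝ) := by exact_mod_cast this
          _ = 2*(N:ℝ) := by push_cast; ring
    have h1 : P ^ (1 / (N:ℝ)) < 2*(N:ℝ) := by
      calc P ^ (1 / (N:ℝ)) < ((2*(N:ℝ)) ^ N) ^ (1 / (N:ℝ)) :=
            Real.rpow_lt_rpow (le_of_lt hPpos) hlt (by positivity)
        _ = 2*(N:ℝ) := hpowcollapse
    have hpi : 0 < Real.pi / (4 * (N:ℝ)) := by positivity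
    calc Real.pi / (4 * N) * P ^ (1 / (N:ℝ)) < Real.pi / (4 * N) * (2*(N:ℝ)) :=
          mul_lt_mul_of_pos_left h1 hpi
      _ = Real.pi / 2 := by field_simp; ring
  refine ⟨hlow, hup, ?_, ?_⟩
  · intro heq
    by_contra hne
    have : 2 ≤ N := by omega
    exact absurd heq (ne_of_lt (hstrict this))
  · intro h1
    subst h1
    have hP2 : P = 2 := by
      rw [hPdef]; norm_num [Nat.factorial]
    rw [hP2]
    push_cast
    ring
end
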